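/- arXiv:1210.0514 — 2 statements merged into one kernel-verified Lean document; each statement's English description precedes it below -/
import Mathlib

section
/- If G is a graph without isolated vertices and H is a graph with domination number γ(H)=1, then γ_rk(G ∘ H) ≤ k·γ(G) for every positive integer k. -/
open Finset

def SimpleGraph.lexProd {α β : Type*} (G : SimpleGraph α) (H : SimpleGraph β) :
    SimpleGraph (α × β) where
  Adj x y := G.Adj x.1 y.1 ∨ (x.1 = y.1 ∧ H.Adj x.2 y.2)
  symm := by
    constructor
    intro x y h
    rcases h with h | ⟨e, h⟩
    · exact Or.inl h.symm
    · exact Or.inr ⟨e.symm, h.symm⟩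
  loopless := by
    constructor
    intro x h
    rcases h with h | ⟨_, h⟩
    · exact G.irrefl h
    · exact H.irrefl h

/-- `f` is a `k`-rainbow dominating function of `G`. -/
def IsRDF {α : Type*} (G : SimpleGraph α) (k : ℕ) (f : α → Finset (Fin k)) : Prop :=
  ∀ v, f v = ∅ → ∀ i : Fin k, ∃ u, G.Adj u v ∧ i ∈ f u

/-- weight of a labeling -/
def rdWeight {α : Type*} [Fintype α] {k : ℕ} (f : α → Finset (Fin k)) : ℕ :=
  ∑ v, (f v).card

/-- the `k`-rainbow domination number -/
noncomputable def rdNum {α : Type*} (G : SimpleGraph α) [Fintype α] (k : ℕ) : ℕ :=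
  sInf {n | ∃ f : α → Finset (Fin k), IsRDF G k f ∧ rdWeight f = n}

/-- `D` is a dominating set of `G` -/
def IsDom {α : Type*} (G : SimpleGraph α) (D : Set α) : Prop :=
  ∀ v, v ∈ D ∨ ∃ u ∈ D, G.Adj u v

/-- `D` is a total dominating set of `G` -/
def IsTotalDom {α : Type*} (G : SimpleGraph α) (D : Set α) : Prop :=
  ∀ v, ∃ u ∈ D, G.Adj u v

/-- the domination number -/
noncomputable def domNum {α : Type*} (G : SimpleGraph α) [Fintype α] : ℕ :=
  sInf {n | ∃ D : Finset α, IsDom G ↑D ∧ D.card = n}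

/-- the total domination number -/
noncomputable def totalDomNum {α : Type*} (G : SimpleGraph α) [Fintype α] : ℕ :=
  sInf {n | ∃ D : Finset α, IsTotalDom G ↑D ∧ D.card = n}

/-- `(A, B)` is a dominating couple of `G` -/
def IsDomCouple {α : Type*} [DecidableEq α] (G : SimpleGraph α) (A B : Finset α) : Prop :=
  Disjoint A B ∧ ∀ x, x ∉ B → ∃ w ∈ A ∪ B, G.Adj w x

/-!
Fix a minimum dominating set `D` of `G` and a vertex `h₀` dominating `H`, and give every
vertex of `D × {h₀}` all `k` colours. A vertex `(g, h)` with `g ∈ D`, `h ≠ h₀` is adjacent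
to `(g, h₀)` inside its `H`-fibre; a vertex with `g ∉ D` is adjacent to every vertex of the
fibre over a `G`-neighbour of `g` in `D`, in particular to its copy of `h₀`. The weight is
`k * |D|`.
-/

section Domination

variable {α : Type*} [Fintype α] (G : SimpleGraph α)

theorem exists_isDom_card_eq_domNum : ∃ D : Finset α, IsDom G ↑D ∧ D.card = domNum G :=
  Nat.sInf_mem (s := {n | ∃ D : Finset α, IsDom G ↑D ∧ D.card = n})
    ⟨_, univ, fun _ => Or.inl (mem_coe.2 (mem_univ _)), rfl⟩

theorem exists_isDom_singleton_of_domNum_eq_one (hG : domNum G = 1) :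
    ∃ v : α, IsDom G {v} := by
  obtain ⟨D, hD, hcard⟩ := exists_isDom_card_eq_domNum G
  obtain ⟨v, rfl⟩ := card_eq_one.1 (hcard.trans hG)
  exact ⟨v, by simpa using hD⟩

end Domination

def fullLabelingOn {α : Type*} [DecidableEq α] (k : ℕ) (S : Finset α) :
    α → Finset (Fin k) :=
  fun x => if x ∈ S then univ else ∅

theorem fullLabelingOn_apply_of_mem {α : Type*} [DecidableEq α] {k : ℕ} {S : Finset α} {x : α}
    (hx : x ∈ S) : fullLabelingOn k S x = univ :=
  if_pos hx

section RainbowDomination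

variable {α : Type*} [Fintype α] {k : ℕ}

theorem rdNum_le_rdWeight {G : SimpleGraph α} {f : α → Finset (Fin k)} (hf : IsRDF G k f) :
    rdNum G k ≤ rdWeight f :=
  Nat.sInf_le ⟨f, hf, rfl⟩

theorem rdWeight_fullLabelingOn [DecidableEq α] (S : Finset α) :
    rdWeight (fullLabelingOn k S) = k * S.card := by
  simp only [rdWeight, fullLabelingOn, apply_ite card, card_univ, Fintype.card_fin,
    card_empty, sum_ite_mem, univ_inter, sum_const, smul_eq_mul,
    mul_comm]

end RainbowDomination

theorem isRDF_lexProd_fullLabelingOn {α β : Type*} [DecidableEq α] [DecidableEq β]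
    {G : SimpleGraph α} {H : SimpleGraph β} {D : Finset α} {h₀ : β}
    (hD : IsDom G ↑D) (hH : IsDom H {h₀}) (k : ℕ) :
    IsRDF (G.lexProd H) k (fullLabelingOn k (D ×ˢ {h₀})) := by
  rintro ⟨g, h⟩ hempty i
  have hcolour : ∀ g' ∈ D, i ∈ fullLabelingOn k (D ×ˢ {h₀}) (g', h₀) := by
    intro g' hg'
    rw [fullLabelingOn_apply_of_mem (mk_mem_product hg' (mem_singleton_self h₀))]
    exact mem_univ i
  by_cases hg : g ∈ D
  · have hh : h ≠ h₀ := by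
      rintro rfl
      rw [fullLabelingOn_apply_of_mem (mk_mem_product hg (mem_singleton_self h))] at hempty
      exact notMem_empty i (hempty ▸ mem_univ i)
    obtain ⟨u, rfl, hadj⟩ := (hH h).resolve_left hh
    exact ⟨(g, u), Or.inr ⟨rfl, hadj⟩, hcolour g hg⟩
  · obtain ⟨u, hu, hadj⟩ := (hD g).resolve_left hg
    exact ⟨(u, h₀), Or.inl hadj, hcolour u hu⟩

theorem stmt3_general {α β : Type*} [Fintype α] [Fintype β]
    (G : SimpleGraph α) (H : SimpleGraph β)
    (hH : domNum H = 1) (k : ℕ) :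
    rdNum (G.lexProd H) k ≤ k * domNum G := by
  classical
  obtain ⟨D, hD, hcard⟩ := exists_isDom_card_eq_domNum G
  obtain ⟨h₀, hh₀⟩ := exists_isDom_singleton_of_domNum_eq_one H hH
  calc rdNum (G.lexProd H) k
      ≤ rdWeight (fullLabelingOn k (D ×ˢ {h₀})) :=
        rdNum_le_rdWeight (isRDF_lexProd_fullLabelingOn hD hh₀ k)
    _ = k * domNum G := by
        rw [rdWeight_fullLabelingOn, card_product, card_singleton, mul_one, hcard]

theorem stmt3 {α β : Type*} [Fintype α] [Fintype β]
    (G : SimpleGraph α) (H : SimpleGraph β)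
    (hG : ∀ v : α, ∃ u, G.Adj u v) (hH : domNum H = 1) (k : ℕ) (hk : 0 < k) :
    rdNum (G.lexProd H) k ≤ k * domNum G :=
  stmt3_general G H hH k
end

section
/- If G and H are non-trivial connected graphs and γ_r2(H) ≥ 4, then γ_r2(G ∘ H) = 2γ_t(G). -/
open Finset

/- Labelling one vertex `(g, h₀)` of each fibre above a minimum total dominating set of `G` with
`{0, 1}` shows `γ_r2(G ∘ H) ≤ 2 γ_t(G)`.

Conversely, let `f` be a 2-rainbow dominating function of `G ∘ H`. For a colour `i`, let `Aᵢ` be the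
set of `g` whose fibre `{g} × H` carries `i`, and `Bᵢ` the set of `g` no neighbour of which has
such a fibre. Then `Aᵢ` together with one neighbour of each vertex of `Bᵢ` totally dominates `G`, so
`2 γ_t(G) ≤ ∑ᵢ (|Aᵢ| + |Bᵢ|)`, and it remains to bound the contribution of each `g` by the weight
`p` of its fibre. If `g ∈ Bᵢ`, an unlabelled vertex of the fibre can only see `i` inside the fibre, so
promoting every label containing `i` to `{0, 1}` gives a 2-rainbow dominating function of `H`; if
`g ∈ B₀ ∩ B₁`, the fibre itself is one. With `xᵢ` the number of labels in the fibre containing `i`,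
`γ_r2(H) ≥ 4` thus gives `4 ≤ p + xᵢ` in the first case and `4 ≤ p` in the second, which suffices. -/

section

variable {α β : Type*}

section TotalDomination

variable [Fintype α] {G : SimpleGraph α}

lemma totalDomNum_le {D : Finset α} (hD : IsTotalDom G D) : totalDomNum G ≤ #D :=
  Nat.sInf_le ⟨D, hD, rfl⟩

lemma exists_isTotalDom_card_eq_totalDomNum (hG : ∀ v, ∃ u, G.Adj u v) :
    ∃ D : Finset α, IsTotalDom G D ∧ #D = totalDomNum G :=
  Nat.sInf_mem (s := {n | ∃ D : Finset α, IsTotalDom G ↑D ∧ #D = n})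
    ⟨_, univ, fun v => (hG v).imp fun _ hu => ⟨mem_coe.2 (mem_univ _), hu⟩, rfl⟩

lemma totalDomNum_le_card_add_card (hG : ∀ v, ∃ u, G.Adj u v) {A B : Finset α}
    (hAB : ∀ v ∉ B, ∃ u ∈ A, G.Adj u v) : totalDomNum G ≤ #A + #B := by
  classical
  choose nb hnb using hG
  have hD : IsTotalDom G ↑(A ∪ B.image nb) := by
    intro v
    by_cases hv : v ∈ B
    · exact ⟨nb v, mem_coe.2 (mem_union_right _ (mem_image_of_mem nb hv)), hnb v⟩
    · obtain ⟨u, hu, huv⟩ := hAB v hv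
      exact ⟨u, mem_coe.2 (mem_union_left _ hu), huv⟩
  calc totalDomNum G ≤ #(A ∪ B.image nb) := totalDomNum_le hD
    _ ≤ #A + #(B.image nb) := card_union_le _ _
    _ ≤ #A + #B := by grw [card_image_le]

end TotalDomination

section RainbowDomination

variable [Fintype α] {G : SimpleGraph α} {k : ℕ}

lemma rdNum_le {f : α → Finset (Fin k)} (hf : IsRDF G k f) : rdNum G k ≤ rdWeight f :=
  Nat.sInf_le ⟨f, hf, rfl⟩

lemma exists_isRDF_rdWeight_eq_rdNum (G : SimpleGraph α) (k : ℕ) :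
    ∃ f, IsRDF G k f ∧ rdWeight f = rdNum G k :=
  Nat.sInf_mem (s := {n | ∃ f : α → Finset (Fin k), IsRDF G k f ∧ rdWeight f = n})
    ⟨_, fun _ => univ, fun _ hv i => absurd (hv ▸ mem_univ i) (notMem_empty i), rfl⟩

lemma rdWeight_eq_sum_card_filter_mem (f : α → Finset (Fin k)) :
    rdWeight f = ∑ i, #{v | i ∈ f v} := by
  simp only [rdWeight, card_filter]
  rw [sum_comm]
  simp

def saturate (f : α → Finset (Fin k)) (i : Fin k) : α → Finset (Fin k) :=
  fun v => if i ∈ f v then univ else f v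

lemma rdWeight_saturate_le (f : α → Finset (Fin k)) (i : Fin k) :
    rdWeight (saturate f i) ≤ rdWeight f + (k - 1) * #{v | i ∈ f v} := by
  simp only [rdWeight, saturate, card_filter, mul_sum, ← sum_add_distrib]
  refine sum_le_sum fun v _ => ?_
  split_ifs with hi
  · have := card_pos.2 ⟨i, hi⟩
    simp only [card_univ, Fintype.card_fin]
    omega
  · simp

end RainbowDomination

section LexProd

variable {G : SimpleGraph α} {H : SimpleGraph β} {k : ℕ} {f : α × β → Finset (Fin k)}

lemma rdNum_lexProd_le [Fintype α] [Fintype β] [Nonempty β] {D : Finset α}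
    (hD : IsTotalDom G D) : rdNum (G.lexProd H) k ≤ k * #D := by
  classical
  obtain ⟨h₀⟩ := ‹Nonempty β›
  let f : α × β → Finset (Fin k) := fun x => if x.1 ∈ D ∧ x.2 = h₀ then univ else ∅
  have hf : IsRDF (G.lexProd H) k f := by
    intro v _ i
    obtain ⟨d, hd, hdv⟩ := hD v.1
    exact ⟨(d, h₀), Or.inl hdv, by simp_all [f]⟩
  calc rdNum (G.lexProd H) k ≤ rdWeight f := rdNum_le hf
    _ = k * #D := by
      simp [rdWeight, f, apply_ite card, Fintype.sum_prod_type, ite_and, sum_ite_mem, mul_comm]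

lemma IsRDF.exists_adj_mem_fiber (hf : IsRDF (G.lexProd H) k f) {g : α} {h : β} {i : Fin k}
    (hgh : f (g, h) = ∅) (hi : ∀ y, G.Adj y g → ∀ h', i ∉ f (y, h')) :
    ∃ h', H.Adj h' h ∧ i ∈ f (g, h') := by
  obtain ⟨⟨y, h'⟩, hadj | ⟨rfl, hadj⟩, hyi⟩ := hf (g, h) hgh i
  · exact absurd hyi (hi y hadj h')
  · exact ⟨h', hadj, hyi⟩

lemma IsRDF.isRDF_curry (hf : IsRDF (G.lexProd H) k f) {g : α}
    (hg : ∀ i y, G.Adj y g → ∀ h, i ∉ f (y, h)) : IsRDF H k (Function.curry f g) :=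
  fun _ hh i => hf.exists_adj_mem_fiber hh (hg i)

lemma IsRDF.isRDF_saturate_curry (hf : IsRDF (G.lexProd H) k f) {g : α} {i : Fin k}
    (hi : ∀ y, G.Adj y g → ∀ h, i ∉ f (y, h)) : IsRDF H k (saturate (Function.curry f g) i) := by
  intro h hh c
  have hgh : f (g, h) = ∅ := by
    unfold saturate at hh
    split_ifs at hh
    · exact absurd (hh ▸ mem_univ i) (notMem_empty i)
    · exact hh
  obtain ⟨h', hadj, hh'⟩ := hf.exists_adj_mem_fiber hgh hi
  exact ⟨h', hadj, by simp [saturate, hh']⟩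

section Fibres

variable [Fintype α] [Fintype β]

def colored (f : α × β → Finset (Fin k)) (i : Fin k) : Finset α :=
  {g | ∃ h, i ∈ f (g, h)}

def uncovered (G : SimpleGraph α) [DecidableRel G.Adj] (f : α × β → Finset (Fin k))
    (i : Fin k) : Finset α :=
  {g | ∀ y, G.Adj y g → ∀ h, i ∉ f (y, h)}

variable [DecidableRel G.Adj]

lemma mem_uncovered {i : Fin k} {g : α} :
    g ∈ uncovered G f i ↔ ∀ y, G.Adj y g → ∀ h, i ∉ f (y, h) := by
  simp [uncovered]

lemma exists_mem_colored_adj_of_notMem_uncovered {i : Fin k} {v : α}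
    (hv : v ∉ uncovered G f i) : ∃ u ∈ colored f i, G.Adj u v := by
  simp only [mem_uncovered, not_forall, not_not] at hv
  obtain ⟨u, huv, h, hi⟩ := hv
  exact ⟨u, by simpa [colored] using ⟨h, hi⟩, huv⟩

lemma IsRDF.sum_ite_colored_add_ite_uncovered_le [DecidableEq α] (hH : 4 ≤ rdNum H 2)
    {f : α × β → Finset (Fin 2)} (hf : IsRDF (G.lexProd H) 2 f) (g : α) :
    ∑ i, ((if g ∈ colored f i then 1 else 0) + (if g ∈ uncovered G f i then 1 else 0)) ≤
      rdWeight (Function.curry f g) := by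
  set p := rdWeight (Function.curry f g)
  set x : Fin 2 → ℕ := fun i => #{h | i ∈ f (g, h)}
  have hp : p = x 0 + x 1 := (rdWeight_eq_sum_card_filter_mem _).trans (Fin.sum_univ_two _)
  have hA (i : Fin 2) : (if g ∈ colored f i then 1 else 0) ≤ min 1 (x i) := by
    split_ifs with hg
    · obtain ⟨h, hh⟩ : ∃ h, i ∈ f (g, h) := by simpa [colored] using hg
      have : 0 < x i := card_pos.2 ⟨h, by simpa using hh⟩
      omega
    · exact Nat.zero_le _
  have hB (i : Fin 2) (hi : g ∈ uncovered G f i) : 4 ≤ p + x i := by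
    have hsat := rdWeight_saturate_le (Function.curry f g) i
    simp only [Nat.reduceSub, one_mul] at hsat
    exact hH.trans ((rdNum_le (hf.isRDF_saturate_curry (mem_uncovered.1 hi))).trans hsat)
  have hB₀₁ (h₀ : g ∈ uncovered G f 0) (h₁ : g ∈ uncovered G f 1) : 4 ≤ p :=
    hH.trans <| rdNum_le <| hf.isRDF_curry <|
      Fin.forall_fin_two.2 ⟨mem_uncovered.1 h₀, mem_uncovered.1 h₁⟩
  have := hA 0
  have := hA 1
  simp only [Fin.sum_univ_two]
  -- when `g` lies in `Bᵢ` only and `p ≤ 2`, then `xᵢ = p = 2` and the other colour is absent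
  by_cases h₀ : g ∈ uncovered G f 0 <;> by_cases h₁ : g ∈ uncovered G f 1 <;>
    simp only [h₀, h₁, if_true, if_false]
  · have := hB₀₁ h₀ h₁; omega
  · have := hB 0 h₀; omega
  · have := hB 1 h₁; omega
  · omega

end Fibres

lemma IsRDF.two_mul_totalDomNum_le_rdWeight [Fintype α] [Fintype β] (hG : ∀ v, ∃ u, G.Adj u v)
    (hH : 4 ≤ rdNum H 2)
    {f : α × β → Finset (Fin 2)} (hf : IsRDF (G.lexProd H) 2 f) :
    2 * totalDomNum G ≤ rdWeight f := by
  classical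
  calc 2 * totalDomNum G = ∑ _i : Fin 2, totalDomNum G := by simp
    _ ≤ ∑ i, (#(colored f i) + #(uncovered G f i)) := sum_le_sum fun i _ =>
      totalDomNum_le_card_add_card hG fun _ => exists_mem_colored_adj_of_notMem_uncovered
    _ = ∑ g, ∑ i,
          ((if g ∈ colored f i then 1 else 0) + (if g ∈ uncovered G f i then 1 else 0)) := by
      rw [sum_comm]
      simp [sum_add_distrib]
    _ ≤ ∑ g, rdWeight (Function.curry f g) := sum_le_sum fun g _ =>
      hf.sum_ite_colored_add_ite_uncovered_le hH g
    _ = rdWeight f := by simp [rdWeight, Fintype.sum_prod_type]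

end LexProd

end

theorem stmt12_general {α β : Type*} [Fintype α] [Fintype β]
    (G : SimpleGraph α) (H : SimpleGraph β)
    (hGc : G.Connected) (hG : Nontrivial α) (hH : Nontrivial β)
    (hr : 4 ≤ rdNum H 2) :
    rdNum (G.lexProd H) 2 = 2 * totalDomNum G := by
  have hadj (v : α) : ∃ u, G.Adj u v :=
    (hGc.preconnected.exists_adj_of_nontrivial v).imp fun _ h => h.symm
  obtain ⟨D, hD, hDcard⟩ := exists_isTotalDom_card_eq_totalDomNum hadj
  obtain ⟨f, hf, hfw⟩ := exists_isRDF_rdWeight_eq_rdNum (G.lexProd H) 2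
  apply le_antisymm
  · exact hDcard ▸ rdNum_lexProd_le hD
  · exact hfw ▸ hf.two_mul_totalDomNum_le_rdWeight hadj hr

theorem stmt12 {α β : Type*} [Fintype α] [Fintype β]
    (G : SimpleGraph α) (H : SimpleGraph β)
    (hGc : G.Connected) (hHc : H.Connected) (hG : Nontrivial α) (hH : Nontrivial β)
    (hr : 4 ≤ rdNum H 2) :
    rdNum (G.lexProd H) 2 = 2 * totalDomNum G :=
  stmt12_general G H hGc hG hH hr
end
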